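/- Let G be a group, x ∈ G, let A be the subgroup of G generated by x₁, …, x_m, and let P ∈ InvLO_x^A(G) ∩ Cof_x^A(G). Let w ∈ A have a word expression w = x_{i₁}^{j₁} x_{i₂}^{j₂} ⋯ x_{i_n}^{j_n} (each i_q ∈ {1,…,m}, j_q ∈ ℤ), and for p = 1,…,m set e_p = Σ_{q : i_q = p} j_q. If ρ_{x,P}^A(w^N) = 0 for all N ∈ ℤ, then |Σ_{p=1}^m e_p · ρ̄_{x,P}^A(x_p)| ≤ n. Moreover, if A is abelian, then Σ_{p=1}^m e_p · ρ̄_{x,P}^A(x_p) = 0. -/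

import Mathlib

open Filter Topology

/-- A subset `P ⊆ G` is the positive cone of a left ordering: `P·P ⊆ P` and
`G = P ⊔ P⁻¹ ⊔ {1}`. -/
def IsPosCone {G : Type*} [Group G] (P : Set G) : Prop :=
  (∀ a ∈ P, ∀ b ∈ P, a * b ∈ P) ∧
  (∀ g : G, g ∈ P ∨ g⁻¹ ∈ P ∨ g = 1) ∧
  (∀ g : G, g ∈ P → g⁻¹ ∉ P) ∧
  (1 : G) ∉ P

/-- The left-invariant order determined by a positive cone: `a <_P b` iff `a⁻¹ b ∈ P`. -/
def ltC {G : Type*} [Group G] (P : Set G) (a b : G) : Prop := a⁻¹ * b ∈ P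

/-- The non-strict order determined by a positive cone. -/
def leC {G : Type*} [Group G] (P : Set G) (a b : G) : Prop := ltC P a b ∨ a = b

/-- `P ∈ InvLO_x^H(G)`: right multiplication by `x` preserves `<_P` on the
subgroup generated by `H ∪ {x}`. -/
def InvOn {G : Type*} [Group G] (P : Set G) (H : Subgroup G) (x : G) : Prop :=
  ∀ b ∈ Subgroup.closure ((H : Set G) ∪ {x}),
  ∀ b' ∈ Subgroup.closure ((H : Set G) ∪ {x}),
  ltC P b b' → ltC P (b * x) (b' * x)

/-- `P ∈ Cof_x^H(G)`: `x` is cofinal to `H` with respect to `<_P`. -/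
def CofTo {G : Type*} [Group G] (P : Set G) (H : Subgroup G) (x : G) : Prop :=
  ∀ h ∈ H, ∃ N : ℕ, 1 ≤ N ∧ ltC P (x ^ (-(N : ℤ))) h ∧ ltC P h (x ^ (N : ℤ))

/-- `ρ` is the quasi morphism `ρ_{x,P}^H`: if `1 <_P x` then
`x^(ρ h) ≤_P h <_P x^(ρ h + 1)`, and if `x <_P 1` then `x^(-ρ h - 1) <_P h ≤_P x^(-ρ h)`,
for all `h ∈ H`. -/
def RhoChar {G : Type*} [Group G] (P : Set G) (H : Subgroup G) (x : G) (ρ : G → ℤ) : Prop :=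
  ∀ h ∈ H,
    (ltC P 1 x → leC P (x ^ ρ h) h ∧ ltC P h (x ^ (ρ h + 1))) ∧
    (ltC P x 1 → ltC P (x ^ (-(ρ h) - 1)) h ∧ leC P h (x ^ (-(ρ h))))


/-!
Cofinality excludes `x = 1`, and for `x <_P 1` no map satisfies `RhoChar`, so `1 <_P x`.
Invariance of `<_P` under right multiplication by `x` then gives
`ρ a + ρ b ≤ ρ (a b) ≤ ρ a + ρ b + 1` on `A`. Consequently `ρ ≤ ρ̄ ≤ ρ + 1` on `A`, and `ρ̄` is
homogeneous, so `∑ₚ eₚ ρ̄(xₚ) = ∑_q ρ̄(x_{i_q}^{j_q})`. Along the word, the `n` defects of `ρ`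
place `∑_q ρ(x_{i_q}^{j_q})` in `[ρ(w) - n, ρ(w)] = [-n, 0]`, and adding `ρ̄ - ρ ∈ [0, 1]`
termwise keeps the sum in `[-n, n]`. When `A` is abelian, `ρ̄` is additive on `A`, so the sum
is `ρ̄(w) = lim ρ(w^N)/N = 0`.
-/

section

variable {G : Type*} [Group G]

theorem tendsto_div_natCast_of_abs_sub_le {u v : ℕ → ℝ} {C L : ℝ}
    (huv : ∀ N, |u N - v N| ≤ C)
    (hv : Tendsto (fun N => v N / N) atTop (𝓝 L)) :
    Tendsto (fun N => u N / N) atTop (𝓝 L) := by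
  have hdiff : Tendsto (fun N => (u N - v N) / N) atTop (𝓝 0) := by
    refine squeeze_zero_norm (fun N => ?_) (tendsto_const_div_atTop_nhds_zero_nat C)
    rw [Real.norm_eq_abs, abs_div, Nat.abs_cast]
    exact div_le_div_of_nonneg_right (huv N) N.cast_nonneg
  simpa [sub_div] using hdiff.add hv

theorem sum_exponentSum_mul {ι κ : Type*} [Fintype ι] [Fintype κ] [DecidableEq κ]
    (i : ι → κ) (j : ι → ℤ) (g : κ → ℝ) :
    ∑ p, ((∑ q, if i q = p then j q else 0 : ℤ) : ℝ) * g p =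
      ∑ q, (j q : ℝ) * g (i q) := by
  simp only [Int.cast_sum, Finset.sum_mul, apply_ite Int.cast, Int.cast_zero, ite_mul, zero_mul]
  rw [Finset.sum_comm]
  simp

theorem ltC_mul_left_iff {P : Set G} (c : G) {a b : G} : ltC P (c * a) (c * b) ↔ ltC P a b := by
  simp [ltC, mul_assoc]

theorem leC_mul_left {P : Set G} (c : G) {a b : G} (h : leC P a b) : leC P (c * a) (c * b) := by
  rcases h with h | rfl
  exacts [.inl ((ltC_mul_left_iff c).mpr h), .inr rfl]

namespace IsPosCone

variable {P : Set G}

theorem ltC_trans (hP : IsPosCone P) {a b c : G} (hab : ltC P a b) (hbc : ltC P b c) :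
    ltC P a c := by
  simpa [ltC, mul_assoc] using hP.1 _ hab _ hbc

theorem ltC_irrefl (hP : IsPosCone P) (a : G) : ¬ ltC P a a := by
  simpa [ltC] using hP.2.2.2

theorem ltC_trichotomy (hP : IsPosCone P) (a b : G) : ltC P a b ∨ ltC P b a ∨ a = b := by
  rcases hP.2.1 (a⁻¹ * b) with h | h | h
  · exact .inl h
  · exact .inr (.inl (by simpa [ltC] using h))
  · exact .inr (.inr (inv_mul_eq_one.mp h))

theorem ltC_of_leC_of_ltC (hP : IsPosCone P) {a b c : G} (hab : leC P a b) (hbc : ltC P b c) :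
    ltC P a c := by
  rcases hab with hab | rfl
  exacts [hP.ltC_trans hab hbc, hbc]

theorem ltC_of_ltC_of_leC (hP : IsPosCone P) {a b c : G} (hab : ltC P a b) (hbc : leC P b c) :
    ltC P a c := by
  rcases hbc with hbc | rfl
  exacts [hP.ltC_trans hab hbc, hab]

theorem leC_trans (hP : IsPosCone P) {a b c : G} (hab : leC P a b) (hbc : leC P b c) :
    leC P a c := by
  rcases hab with hab | rfl
  exacts [.inl (hP.ltC_of_ltC_of_leC hab hbc), hbc]

theorem zpow_mem_iff (hP : IsPosCone P) {x : G} (hx : x ∈ P) (d : ℤ) :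
    x ^ d ∈ P ↔ 0 < d := by
  have hpos : ∀ n : ℕ, x ^ (n + 1) ∈ P := fun n => by
    induction n with
    | zero => simpa using hx
    | succ n ih => simpa [pow_succ] using hP.1 _ ih _ hx
  obtain ⟨n, rfl | rfl⟩ := d.eq_nat_or_neg
  · rcases n with _ | n
    · simpa using hP.2.2.2
    · simpa [← zpow_natCast] using hpos n
  · rcases n with _ | n
    · simpa using hP.2.2.2
    · have := hP.2.2.1 _ (hpos n)
      simp only [zpow_neg, zpow_natCast, this, false_iff]
      omega

theorem ltC_zpow_iff (hP : IsPosCone P) {x : G} (hx : x ∈ P) (k l : ℤ) :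
    ltC P (x ^ k) (x ^ l) ↔ k < l := by
  rw [ltC, ← zpow_neg, ← zpow_add, hP.zpow_mem_iff hx]
  omega

theorem lt_of_zpow_leC_of_ltC_zpow (hP : IsPosCone P) {x g : G} (hx : x ∈ P) {k l : ℤ}
    (hk : leC P (x ^ k) g) (hl : ltC P g (x ^ l)) : k < l :=
  (hP.ltC_zpow_iff hx k l).mp (hP.ltC_of_leC_of_ltC hk hl)

section RightInvariance

variable {S : Subgroup G} {x : G}

theorem ltC_mul_right_iff (hP : IsPosCone P)
    (hinv : ∀ b ∈ S, ∀ b' ∈ S, ltC P b b' → ltC P (b * x) (b' * x))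
    {b b' : G} (hb : b ∈ S) (hb' : b' ∈ S) :
    ltC P (b * x) (b' * x) ↔ ltC P b b' := by
  refine ⟨fun h => ?_, hinv b hb b' hb'⟩
  rcases hP.ltC_trichotomy b b' with h' | h' | rfl
  · exact h'
  · exact absurd (hP.ltC_trans h (hinv b' hb' b hb h')) (hP.ltC_irrefl _)
  · exact absurd h (hP.ltC_irrefl _)

theorem ltC_mul_zpow_iff (hP : IsPosCone P)
    (hinv : ∀ b ∈ S, ∀ b' ∈ S, ltC P b b' → ltC P (b * x) (b' * x))
    (hxS : x ∈ S) (k : ℤ) {b b' : G} (hb : b ∈ S) (hb' : b' ∈ S) :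
    ltC P (b * x ^ k) (b' * x ^ k) ↔ ltC P b b' := by
  induction k using Int.induction_on with
  | zero => simp
  | succ k ih =>
    rw [zpow_add_one, ← mul_assoc, ← mul_assoc, hP.ltC_mul_right_iff hinv
      (mul_mem hb (zpow_mem hxS k)) (mul_mem hb' (zpow_mem hxS k)), ih]
  | pred k ih =>
    have hmem : ∀ {c}, c ∈ S → c * x ^ (-(k : ℤ) - 1) ∈ S :=
      fun hc => mul_mem hc (zpow_mem hxS _)
    rw [← ih, ← hP.ltC_mul_right_iff hinv (hmem hb) (hmem hb')]
    simp [mul_assoc, ← zpow_add_one]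

theorem leC_mul_zpow (hP : IsPosCone P)
    (hinv : ∀ b ∈ S, ∀ b' ∈ S, ltC P b b' → ltC P (b * x) (b' * x))
    (hxS : x ∈ S) (k : ℤ) {b b' : G} (hb : b ∈ S) (hb' : b' ∈ S)
    (h : leC P b b') : leC P (b * x ^ k) (b' * x ^ k) := by
  rcases h with h | rfl
  exacts [.inl ((hP.ltC_mul_zpow_iff hinv hxS k hb hb').mpr h), .inr rfl]

end RightInvariance

end IsPosCone

structure IsQuasimorphismOn (A : Subgroup G) (ρ : G → ℤ) : Prop where
  map_one : ρ 1 = 0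
  le_map_mul : ∀ a ∈ A, ∀ b ∈ A, ρ a + ρ b ≤ ρ (a * b)
  map_mul_le : ∀ a ∈ A, ∀ b ∈ A, ρ (a * b) ≤ ρ a + ρ b + 1

theorem IsPosCone.isQuasimorphismOn_of_rhoChar {P : Set G} {A : Subgroup G} {x : G}
    {ρ : G → ℤ} (hP : IsPosCone P) (hx : ltC P 1 x) (hinv : InvOn P A x)
    (hρ : RhoChar P A x ρ) : IsQuasimorphismOn A ρ := by
  have hxP : x ∈ P := by simpa [ltC] using hx
  have hxS : x ∈ Subgroup.closure ((A : Set G) ∪ {x}) :=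
    Subgroup.subset_closure (Set.mem_union_right _ rfl)
  have hAS : ∀ a ∈ A, a ∈ Subgroup.closure ((A : Set G) ∪ {x}) :=
    fun a ha => Subgroup.subset_closure (Set.mem_union_left _ ha)
  have hbounds := fun a (ha : a ∈ A) => (hρ a ha).1 hx
  have hmul : ∀ a ∈ A, ∀ b ∈ A,
      leC P (x ^ (ρ a + ρ b)) (a * b) ∧ ltC P (a * b) (x ^ (ρ a + ρ b + 2)) := by
    intro a ha b hb
    obtain ⟨ha₁, ha₂⟩ := hbounds a ha
    obtain ⟨hb₁, hb₂⟩ := hbounds b hb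
    constructor
    · rw [zpow_add]
      exact hP.leC_trans (hP.leC_mul_zpow hinv hxS _ (zpow_mem hxS _) (hAS a ha) ha₁)
        (leC_mul_left a hb₁)
    · have h := (hP.ltC_mul_zpow_iff hinv hxS (ρ b + 1) (hAS a ha) (zpow_mem hxS _)).mpr ha₂
      rw [← zpow_add, show ρ a + 1 + (ρ b + 1) = ρ a + ρ b + 2 by ring] at h
      exact hP.ltC_trans ((ltC_mul_left_iff a).mpr hb₂) h
  refine ⟨?_, fun a ha b hb => ?_, fun a ha b hb => ?_⟩
  · obtain ⟨h₁, h₂⟩ := hbounds 1 (one_mem A)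
    have := hP.lt_of_zpow_leC_of_ltC_zpow hxP h₁ (l := 1) (by simpa using hx)
    have := hP.lt_of_zpow_leC_of_ltC_zpow hxP (k := 0) (.inr (zpow_zero x)) h₂
    omega
  · have := hP.lt_of_zpow_leC_of_ltC_zpow hxP (hmul a ha b hb).1
      (hbounds (a * b) (mul_mem ha hb)).2
    omega
  · have := hP.lt_of_zpow_leC_of_ltC_zpow hxP (hbounds (a * b) (mul_mem ha hb)).1
      (hmul a ha b hb).2
    omega

/-- For `x <_P 1` the interval `x^(-N-1) <_P a ≤_P x^(-N)` in `RhoChar` is empty. -/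
theorem IsPosCone.one_ltC_of_rhoChar {P : Set G} {A : Subgroup G} {x : G} {ρ : G → ℤ}
    (hP : IsPosCone P) (hcof : CofTo P A x) (hρ : RhoChar P A x ρ) : ltC P 1 x := by
  rcases hP.2.1 x with hx | hx | rfl
  · simpa [ltC] using hx
  · obtain ⟨h₁, h₂⟩ := (hρ 1 (one_mem A)).2 (by simpa [ltC] using hx)
    rw [show -ρ 1 - 1 = -(ρ 1 + 1) by ring, ← inv_zpow'] at h₁
    rw [← inv_zpow'] at h₂
    have := hP.ltC_zpow_iff hx _ _ |>.mp (hP.ltC_of_ltC_of_leC h₁ h₂)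
    omega
  · obtain ⟨N, -, -, h⟩ := hcof 1 (one_mem A)
    exact absurd (by simpa using h) (hP.ltC_irrefl 1)

def IsHomogenizationOn (A : Subgroup G) (ρ : G → ℤ) (ρbar : G → ℝ) : Prop :=
  ∀ a ∈ A, Tendsto (fun N : ℕ => (ρ (a ^ N) : ℝ) / N) atTop (𝓝 (ρbar a))

namespace IsQuasimorphismOn

variable {A : Subgroup G} {ρ : G → ℤ} {a b : G}

theorem pow_bounds (hq : IsQuasimorphismOn A ρ) (ha : a ∈ A) (N : ℕ) :
    N * ρ a ≤ ρ (a ^ N) ∧ ρ (a ^ N) ≤ N * ρ a + N := by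
  induction N with
  | zero => simp [hq.map_one]
  | succ N ih =>
    have h₁ := hq.le_map_mul _ (pow_mem ha N) a ha
    have h₂ := hq.map_mul_le _ (pow_mem ha N) a ha
    rw [pow_succ]
    push_cast
    constructor <;> linarith [ih.1, ih.2]

theorem list_prod_bounds (hq : IsQuasimorphismOn A ρ) {L : List G} (hL : ∀ g ∈ L, g ∈ A) :
    (L.map ρ).sum ≤ ρ L.prod ∧ ρ L.prod ≤ (L.map ρ).sum + L.length := by
  induction L with
  | nil => simp [hq.map_one]
  | cons g L ih =>
    have hg : g ∈ A := hL g List.mem_cons_self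
    have hLA : ∀ g ∈ L, g ∈ A := fun g' hg' => hL g' (List.mem_cons_of_mem g hg')
    have h₁ := hq.le_map_mul g hg _ (list_prod_mem hLA)
    have h₂ := hq.map_mul_le g hg _ (list_prod_mem hLA)
    have := ih hLA
    simp only [List.prod_cons, List.map_cons, List.sum_cons, List.length_cons]
    omega

variable {ρbar : G → ℝ}

theorem map_le_stable (hq : IsQuasimorphismOn A ρ)
    (hρbar : IsHomogenizationOn A ρ ρbar) (ha : a ∈ A) : (ρ a : ℝ) ≤ ρbar a := by
  refine ge_of_tendsto (hρbar a ha) ?_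
  filter_upwards [eventually_gt_atTop 0] with N hN
  rw [le_div_iff₀ (by exact_mod_cast hN), mul_comm]
  exact_mod_cast (hq.pow_bounds ha N).1

theorem stable_le_map_add_one (hq : IsQuasimorphismOn A ρ)
    (hρbar : IsHomogenizationOn A ρ ρbar) (ha : a ∈ A) :
    ρbar a ≤ ρ a + 1 := by
  refine le_of_tendsto (hρbar a ha) ?_
  filter_upwards [eventually_gt_atTop 0] with N hN
  rw [div_le_iff₀ (by exact_mod_cast hN)]
  have : (ρ (a ^ N) : ℝ) ≤ N * ρ a + N := by exact_mod_cast (hq.pow_bounds ha N).2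
  linarith

theorem stable_one (hq : IsQuasimorphismOn A ρ)
    (hρbar : IsHomogenizationOn A ρ ρbar) : ρbar 1 = 0 :=
  tendsto_nhds_unique (hρbar 1 (one_mem A)) (by simp [hq.map_one])

theorem stable_inv (hq : IsQuasimorphismOn A ρ)
    (hρbar : IsHomogenizationOn A ρ ρbar) (ha : a ∈ A) : ρbar a⁻¹ = -ρbar a := by
  refine tendsto_nhds_unique (hρbar a⁻¹ (inv_mem ha))
    (tendsto_div_natCast_of_abs_sub_le (v := fun N => -(ρ (a ^ N) : ℝ)) (C := 1) (fun N => ?_)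
      (by simpa [neg_div] using (hρbar a ha).neg))
  have h₁ := hq.le_map_mul _ (pow_mem ha N) _ (pow_mem (inv_mem ha) N)
  have h₂ := hq.map_mul_le _ (pow_mem ha N) _ (pow_mem (inv_mem ha) N)
  rw [inv_pow, mul_inv_cancel, hq.map_one, ← inv_pow] at h₁ h₂
  rw [sub_neg_eq_add, abs_le]
  constructor <;> norm_cast <;> omega

theorem stable_pow (hq : IsQuasimorphismOn A ρ)
    (hρbar : IsHomogenizationOn A ρ ρbar) (ha : a ∈ A) (c : ℕ) :
    ρbar (a ^ c) = c * ρbar a := by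
  rcases Nat.eq_zero_or_pos c with rfl | hc
  · simpa using hq.stable_one hρbar
  refine tendsto_nhds_unique (hρbar (a ^ c) (pow_mem ha c)) ?_
  have hsub := ((hρbar a ha).comp (tendsto_id.const_mul_atTop' hc)).const_mul (c : ℝ)
  refine hsub.congr fun N => ?_
  have hc' : (c : ℝ) ≠ 0 := by positivity
  simp only [Function.comp_apply, id, ← pow_mul, Nat.cast_mul]
  field_simp

theorem stable_zpow (hq : IsQuasimorphismOn A ρ)
    (hρbar : IsHomogenizationOn A ρ ρbar) (ha : a ∈ A) (k : ℤ) :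
    ρbar (a ^ k) = k * ρbar a := by
  obtain ⟨c, rfl | rfl⟩ := k.eq_nat_or_neg
  · simpa using hq.stable_pow hρbar ha c
  · rw [zpow_neg, zpow_natCast, hq.stable_inv hρbar (pow_mem ha c), hq.stable_pow hρbar ha c]
    push_cast
    ring

theorem stable_mul_of_commute (hq : IsQuasimorphismOn A ρ)
    (hρbar : IsHomogenizationOn A ρ ρbar) (ha : a ∈ A) (hb : b ∈ A)
    (hab : Commute a b) : ρbar (a * b) = ρbar a + ρbar b := by
  refine tendsto_nhds_unique (hρbar (a * b) (mul_mem ha hb))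
    (tendsto_div_natCast_of_abs_sub_le (v := fun N => (ρ (a ^ N) + ρ (b ^ N) : ℝ)) (C := 1)
      (fun N => ?_) (by simpa [add_div] using (hρbar a ha).add (hρbar b hb)))
  have h₁ := hq.le_map_mul _ (pow_mem ha N) _ (pow_mem hb N)
  have h₂ := hq.map_mul_le _ (pow_mem ha N) _ (pow_mem hb N)
  rw [← hab.mul_pow] at h₁ h₂
  rw [abs_le]
  constructor <;> norm_cast <;> omega

theorem stable_list_prod (hq : IsQuasimorphismOn A ρ)
    (hρbar : IsHomogenizationOn A ρ ρbar) (hcomm : ∀ a ∈ A, ∀ b ∈ A, a * b = b * a)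
    {L : List G} (hL : ∀ g ∈ L, g ∈ A) : ρbar L.prod = (L.map ρbar).sum := by
  induction L with
  | nil => simpa using hq.stable_one hρbar
  | cons g L ih =>
    have hg : g ∈ A := hL g List.mem_cons_self
    have hLA : ∀ g ∈ L, g ∈ A := fun g' hg' => hL g' (List.mem_cons_of_mem g hg')
    rw [List.prod_cons, List.map_cons, List.sum_cons, ← ih hLA,
      hq.stable_mul_of_commute hρbar hg (list_prod_mem hLA) (hcomm _ hg _ (list_prod_mem hLA))]

/-- Each factor contributes `ρ g ≤ ρbar g ≤ ρ g + 1`, while the defects of `ρ` along the product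
add up to at most `L.length`. -/
theorem abs_sum_stable_le_length (hq : IsQuasimorphismOn A ρ)
    (hρbar : IsHomogenizationOn A ρ ρbar) {L : List G}
    (hL : ∀ g ∈ L, g ∈ A) (hprod : ρ L.prod = 0) : |(L.map ρbar).sum| ≤ L.length := by
  have hρ := hq.list_prod_bounds hL
  rw [hprod] at hρ
  have hcast : (((L.map ρ).sum : ℤ) : ℝ) = (L.map fun g => (ρ g : ℝ)).sum := by
    rw [Int.cast_list_sum, List.map_map]
    rfl
  have hsum_nonpos : (((L.map ρ).sum : ℤ) : ℝ) ≤ 0 := by exact_mod_cast hρ.1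
  have hsum_ge : 0 ≤ (((L.map ρ).sum : ℤ) : ℝ) + L.length := by exact_mod_cast hρ.2
  have hlow : (L.map fun g => (ρ g : ℝ)).sum ≤ (L.map ρbar).sum :=
    List.sum_le_sum fun g hg => hq.map_le_stable hρbar (hL g hg)
  have hup : (L.map ρbar).sum ≤ (L.map fun g => (ρ g : ℝ)).sum + L.length := by
    simpa [List.sum_map_add] using
      List.sum_le_sum fun g hg => hq.stable_le_map_add_one hρbar (hL g hg)
  rw [hcast] at hsum_nonpos hsum_ge
  exact abs_le.mpr ⟨by linarith, by linarith⟩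

end IsQuasimorphismOn

end

/-- let `A` be the subgroup generated by `x₁, …, x_m`, let
`w = x_{i₁}^{j₁} ⋯ x_{i_n}^{j_n} ∈ A` with exponent sums `e_p = Σ_{q : i_q = p} j_q`.
If `ρ_{x,P}^A(w^N) = 0` for all `N ∈ ℤ`, then `|Σ_p e_p ρ̄(x_p)| ≤ n`; and if `A` is
abelian then `Σ_p e_p ρ̄(x_p) = 0`. -/
theorem exponent_sum_bound_of_rho_vanishing {G : Type*} [Group G] (x : G)
    (m : ℕ) (xs : Fin m → G) (P : Set G) (hP : IsPosCone P)
    (hinv : InvOn P (Subgroup.closure (Set.range xs)) x)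
    (hcof : CofTo P (Subgroup.closure (Set.range xs)) x)
    (ρ : G → ℤ) (hρ : RhoChar P (Subgroup.closure (Set.range xs)) x ρ)
    (ρbar : G → ℝ)
    (hρbar : ∀ a ∈ Subgroup.closure (Set.range xs),
      Tendsto (fun N : ℕ => (ρ (a ^ N) : ℝ) / N) atTop (𝓝 (ρbar a)))
    (n : ℕ) (i : Fin n → Fin m) (j : Fin n → ℤ) (w : G)
    (hw : w = (List.ofFn fun q => xs (i q) ^ j q).prod)
    (e : Fin m → ℤ) (he : ∀ p, e p = ∑ q : Fin n, if i q = p then j q else 0)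
    (h0 : ∀ N : ℤ, ρ (w ^ N) = 0) :
    |∑ p : Fin m, (e p : ℝ) * ρbar (xs p)| ≤ (n : ℝ) ∧
      ((∀ a ∈ Subgroup.closure (Set.range xs), ∀ b ∈ Subgroup.closure (Set.range xs),
          a * b = b * a) →
        ∑ p : Fin m, (e p : ℝ) * ρbar (xs p) = 0) := by
  have hq := hP.isQuasimorphismOn_of_rhoChar (hP.one_ltC_of_rhoChar hcof hρ) hinv hρ
  have hxs : ∀ p, xs p ∈ Subgroup.closure (Set.range xs) :=
    fun p => Subgroup.subset_closure ⟨p, rfl⟩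
  set L := List.ofFn fun q => xs (i q) ^ j q
  have hL : ∀ g ∈ L, g ∈ Subgroup.closure (Set.range xs) := by
    simp only [L, List.mem_ofFn]
    rintro _ ⟨q, rfl⟩
    exact zpow_mem (hxs (i q)) (j q)
  have hsum : ∑ p, (e p : ℝ) * ρbar (xs p) = (L.map ρbar).sum := calc
    _ = ∑ q, (j q : ℝ) * ρbar (xs (i q)) := by simp_rw [he]; exact sum_exponentSum_mul i j _
    _ = (L.map ρbar).sum := by simp [L, List.sum_ofFn, hq.stable_zpow hρbar (hxs _)]
  refine ⟨?_, fun hcomm => ?_⟩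
  · simpa [hsum, L] using hq.abs_sum_stable_le_length hρbar hL (by simpa [hw] using h0 1)
  · rw [hsum, ← hq.stable_list_prod hρbar hcomm hL, ← hw]
    exact tendsto_nhds_unique (hρbar w (hw ▸ list_prod_mem hL))
      (by simp [← zpow_natCast, h0])
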